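/- arXiv:1504.00434 — 9 statements merged into one kernel-verified Lean document; each statement's English description precedes it below -/
import Mathlib

section
/- Suppose the target SINR vector (γ_{i,j}) satisfies, for every cell i ∈ {1,…,N}, the strict inequality (1/N_t)·Σ_{k=1}^{K} γ_{i,k}/(1+γ_{i,k}) + (1/N_t)·Σ_{n≠i} Σ_{k=1}^{K} ((σ_max(n)/σ_{n,n,k})·γ_{n,k})/(1+(σ_max(n)/σ_{n,n,k})·γ_{n,k}) < 1, where σ_max(n) = max over i≠n and k ∈ {1,…,K} of σ_{i,n,k}. Then the target SINR vector is feasible for the ROBF algorithm: there exist positive reals μ_{i,j} and m̄_i (i ∈ {1,…,N}, j ∈ {1,…,K}) such that for every i, 1/m̄_i = (1/N_t)·Σ_{n=1}^{N} Σ_{k=1}^{K} σ_{i,n,k}μ_{n,k}/(1+σ_{i,n,k}μ_{n,k}·m̄_i) + 1, and for every i,j, γ_{i,j} = σ_{i,i,j}·μ_{i,j}·m̄_i. -/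
/-!
Substituting `μ n k = γ n k / (σ n n k * m n)` turns the system into the fixed-point equation
`m = F m` with `F m i = (1 + (1 / Nt) * ∑ n, ∑ k, a i n k / (m n + a i n k * m i))⁻¹`, where
`a i n k = σ i n k / σ n n k * γ n k`. The map `F` is monotone on positive vectors, and the SINR
condition (with `σmax` bounding the cross gains) gives `δ > 0` such that `F` maps the box
`[δ, 1]ᴺ` into itself; Knaster–Tarski then provides the fixed point.
-/

open Finset

open Filter Topology in
theorem Finite.exists_pos_le_one_forall_le {ι : Type*} [Finite ι] {f : ι → ℝ}
    (hf : ∀ i, 0 < f i) : ∃ δ, 0 < δ ∧ δ ≤ 1 ∧ ∀ i, δ ≤ f i := by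
  have h : ∀ᶠ δ in 𝓝[>] (0 : ℝ), δ ≤ 1 ∧ ∀ i, δ ≤ f i := nhdsWithin_le_nhds <|
    (eventually_le_nhds one_pos).and (eventually_all.2 fun i => eventually_le_nhds (hf i))
  exact (eventually_mem_nhdsWithin.and h).exists

open Set in
theorem exists_fixedPt_of_mapsTo_Icc {α : Type*} [ConditionallyCompleteLattice α] {a b : α}
    (hab : a ≤ b) {f : α → α} (hmaps : MapsTo f (Icc a b) (Icc a b))
    (hmono : MonotoneOn f (Icc a b)) : ∃ x ∈ Icc a b, f x = x := by
  have : Fact (a ≤ b) := ⟨hab⟩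
  let g : Icc a b →o Icc a b := ⟨hmaps.restrict, fun x y h => hmono x.2 y.2 h⟩
  exact ⟨_, (OrderHom.lfp g).2, congrArg Subtype.val (OrderHom.map_lfp g)⟩

theorem div_one_add_le_div_one_add {x y : ℝ} (hx : 0 ≤ x) (hxy : x ≤ y) :
    x / (1 + x) ≤ y / (1 + y) := by
  rw [div_le_div_iff₀ (by linarith) (by linarith)]
  nlinarith

section RobfMap

variable {ι κ : Type*} [Fintype ι] [Fintype κ] {a : ι → ι → κ → ℝ}

noncomputable def robfLoad (a : ι → ι → κ → ℝ) (m : ι → ℝ) (i : ι) : ℝ :=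
  ∑ n, ∑ k, a i n k / (m n + a i n k * m i)

theorem robfLoad_nonneg (ha : ∀ i n k, 0 ≤ a i n k) {m : ι → ℝ} (hm : ∀ n, 0 < m n) (i : ι) :
    0 ≤ robfLoad a m i :=
  sum_nonneg fun n _ => sum_nonneg fun k _ => div_nonneg (ha i n k) <|
    add_nonneg (hm n).le (mul_nonneg (ha i n k) (hm i).le)

theorem robfLoad_anti (ha : ∀ i n k, 0 ≤ a i n k) {m m' : ι → ℝ} (hm : ∀ n, 0 < m n)
    (hmm' : m ≤ m') (i : ι) : robfLoad a m' i ≤ robfLoad a m i :=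
  sum_le_sum fun n _ => sum_le_sum fun k _ => div_le_div_of_nonneg_left (ha i n k)
    (add_pos_of_pos_of_nonneg (hm n) (mul_nonneg (ha i n k) (hm i).le))
    (add_le_add (hmm' n) (mul_le_mul_of_nonneg_left (hmm' i) (ha i n k)))

theorem robfLoad_const (a : ι → ι → κ → ℝ) (δ : ℝ) (i : ι) :
    robfLoad a (fun _ => δ) i = (∑ n, ∑ k, a i n k / (1 + a i n k)) / δ := by
  simp only [robfLoad, sum_div, div_div, add_mul, one_mul]

noncomputable def robfMap (c : ℝ) (a : ι → ι → κ → ℝ) (m : ι → ℝ) (i : ι) : ℝ :=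
  (1 + c * robfLoad a m i)⁻¹

variable {c : ℝ}

theorem robfMap_monotoneOn (hc : 0 ≤ c) (ha : ∀ i n k, 0 ≤ a i n k) :
    MonotoneOn (robfMap c a) {m | ∀ i, 0 < m i} := fun _ hm _ hm' hmm' i =>
  inv_anti₀ (add_pos_of_pos_of_nonneg one_pos (mul_nonneg hc (robfLoad_nonneg ha hm' i)))
    (add_le_add_right (mul_le_mul_of_nonneg_left (robfLoad_anti ha hm hmm' i) hc) 1)

theorem robfMap_mapsTo {δ : ℝ} (hδ : 0 < δ) (hc : 0 ≤ c) (ha : ∀ i n k, 0 ≤ a i n k)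
    (hbound : ∀ i, c * ∑ n, ∑ k, a i n k / (1 + a i n k) ≤ 1 - δ) :
    Set.MapsTo (robfMap c a) (Set.Icc (fun _ => δ) 1) (Set.Icc (fun _ => δ) 1) := by
  rintro m ⟨hδm, -⟩
  have hm : ∀ n, 0 < m n := fun n => hδ.trans_le (hδm n)
  refine ⟨fun i => ?_, fun i => inv_le_one_of_one_le₀ <|
    le_add_of_nonneg_right (mul_nonneg hc (robfLoad_nonneg ha hm i))⟩
  have hload : c * robfLoad a m i ≤ (1 - δ) / δ :=
    calc c * robfLoad a m i ≤ c * robfLoad a (fun _ => δ) i :=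
          mul_le_mul_of_nonneg_left (robfLoad_anti ha (fun _ => hδ) hδm i) hc
      _ = (c * ∑ n, ∑ k, a i n k / (1 + a i n k)) / δ := by rw [robfLoad_const, mul_div_assoc]
      _ ≤ (1 - δ) / δ := by gcongr; exact hbound i
  have hpos : 0 < 1 + c * robfLoad a m i :=
    add_pos_of_pos_of_nonneg one_pos (mul_nonneg hc (robfLoad_nonneg ha hm i))
  rw [robfMap, le_inv_comm₀ hδ hpos]
  have : (1 - δ) / δ = δ⁻¹ - 1 := by field_simp
  linarith

theorem exists_robfMap_fixedPt (hc : 0 ≤ c) (ha : ∀ i n k, 0 ≤ a i n k)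
    (hbound : ∀ i, c * ∑ n, ∑ k, a i n k / (1 + a i n k) < 1) :
    ∃ m : ι → ℝ, (∀ i, 0 < m i) ∧ robfMap c a m = m := by
  obtain ⟨δ, hδ, hδ1, hδle⟩ := Finite.exists_pos_le_one_forall_le fun i => sub_pos.2 (hbound i)
  obtain ⟨m, ⟨hδm, -⟩, hfix⟩ := exists_fixedPt_of_mapsTo_Icc (fun _ => hδ1)
    (robfMap_mapsTo hδ hc ha fun i => by linarith [hδle i])
    ((robfMap_monotoneOn hc ha).mono fun _ hm n => hδ.trans_le (hm.1 n))
  exact ⟨m, fun i => hδ.trans_le (hδm i), hfix⟩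

end RobfMap

theorem sum_crossGain_le {ι κ : Type*} [Fintype ι] [DecidableEq ι] [Fintype κ]
    {σ : ι → ι → κ → ℝ} {γ : ι → κ → ℝ} {σmax : ι → ℝ} (hσ : ∀ i n k, 0 < σ i n k)
    (hγ : ∀ n k, 0 ≤ γ n k) (hσmax : ∀ i n k, i ≠ n → σ i n k ≤ σmax n) (i : ι) :
    ∑ n, ∑ k, σ i n k / σ n n k * γ n k / (1 + σ i n k / σ n n k * γ n k)
      ≤ ∑ k, γ i k / (1 + γ i k) + ∑ n ∈ univ.filter (fun n => n ≠ i), ∑ k,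
          (σmax n / σ n n k * γ n k) / (1 + σmax n / σ n n k * γ n k) := by
  rw [← add_sum_erase _ _ (mem_univ i), filter_ne']
  exact add_le_add (le_of_eq (sum_congr rfl fun k _ => by rw [div_self (hσ i i k).ne', one_mul]))
    (sum_le_sum fun n hn => sum_le_sum fun k _ => div_one_add_le_div_one_add
      (mul_nonneg (div_nonneg (hσ i n k).le (hσ n n k).le) (hγ n k))
      (mul_le_mul_of_nonneg_right (div_le_div_of_nonneg_right
        (hσmax i n k (ne_of_mem_erase hn).symm) (hσ n n k).le) (hγ n k)))

theorem robf_feasibility_general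
    (N K Nt : ℕ)
    (σ : Fin N → Fin N → Fin K → ℝ) (hσ : ∀ i n k, 0 < σ i n k)
    (γ : Fin N → Fin K → ℝ) (hγ : ∀ i j, 0 < γ i j)
    (σmax : Fin N → ℝ)
    (hσmax : ∀ n : Fin N, IsGreatest {x : ℝ | ∃ i k, i ≠ n ∧ σ i n k = x} (σmax n))
    (hfeas : ∀ i : Fin N,
      (1 / (Nt : ℝ)) * ∑ k, γ i k / (1 + γ i k)
        + (1 / (Nt : ℝ)) * ∑ n ∈ Finset.univ.filter (fun n => n ≠ i), ∑ k,
            (σmax n / σ n n k * γ n k) / (1 + σmax n / σ n n k * γ n k) < 1) :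
    ∃ (μ : Fin N → Fin K → ℝ) (m : Fin N → ℝ),
      (∀ i j, 0 < μ i j) ∧ (∀ i, 0 < m i) ∧
      (∀ i : Fin N, 1 / m i =
        (1 / (Nt : ℝ)) * ∑ n, ∑ k, σ i n k * μ n k / (1 + σ i n k * μ n k * m i) + 1) ∧
      (∀ i j, γ i j = σ i i j * μ i j * m i) := by
  have hc : 0 ≤ 1 / (Nt : ℝ) := by positivity
  have ha : ∀ i n k, 0 ≤ σ i n k / σ n n k * γ n k := fun i n k =>
    mul_nonneg (div_nonneg (hσ i n k).le (hσ n n k).le) (hγ n k).le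
  have hcross i := sum_crossGain_le hσ (fun n k => (hγ n k).le)
    (fun i n k hin => (hσmax n).2 ⟨i, k, hin, rfl⟩) i
  obtain ⟨m, hm, hfix⟩ := exists_robfMap_fixedPt hc ha fun i =>
    (mul_le_mul_of_nonneg_left (hcross i) hc).trans_lt ((mul_add _ _ _).trans_lt (hfeas i))
  refine ⟨fun n k => γ n k / (σ n n k * m n), m,
    fun n k => div_pos (hγ n k) (mul_pos (hσ n n k) (hm n)), hm, fun i => ?_, fun i j => ?_⟩
  · have hload : robfLoad (fun i n k => σ i n k / σ n n k * γ n k) m i =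
        ∑ n, ∑ k, σ i n k * (γ n k / (σ n n k * m n))
          / (1 + σ i n k * (γ n k / (σ n n k * m n)) * m i) := by
      refine sum_congr rfl fun n _ => sum_congr rfl fun k _ => ?_
      have := (hσ n n k).ne'
      have := (hm n).ne'
      field_simp
    rw [one_div, ← inv_eq_iff_eq_inv.1 (congrFun hfix i), hload, add_comm]
  · have := (hσ i i j).ne'
    have := (hm i).ne'
    field_simp

/-- Feasibility of the ROBF algorithm under the sufficient SINR condition. -/
theorem robf_feasibility
    (N K Nt : ℕ) (hN : 0 < N) (hK : 0 < K) (hNt : 0 < Nt)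
    (σ : Fin N → Fin N → Fin K → ℝ) (hσ : ∀ i n k, 0 < σ i n k)
    (γ : Fin N → Fin K → ℝ) (hγ : ∀ i j, 0 < γ i j)
    (σmax : Fin N → ℝ)
    (hσmax : ∀ n : Fin N, IsGreatest {x : ℝ | ∃ i k, i ≠ n ∧ σ i n k = x} (σmax n))
    (hfeas : ∀ i : Fin N,
      (1 / (Nt : ℝ)) * ∑ k, γ i k / (1 + γ i k)
        + (1 / (Nt : ℝ)) * ∑ n ∈ Finset.univ.filter (fun n => n ≠ i), ∑ k,
            (σmax n / σ n n k * γ n k) / (1 + σmax n / σ n n k * γ n k) < 1) :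
    ∃ (μ : Fin N → Fin K → ℝ) (m : Fin N → ℝ),
      (∀ i j, 0 < μ i j) ∧ (∀ i, 0 < m i) ∧
      (∀ i : Fin N, 1 / m i =
        (1 / (Nt : ℝ)) * ∑ n, ∑ k, σ i n k * μ n k / (1 + σ i n k * μ n k * m i) + 1) ∧
      (∀ i j, γ i j = σ i i j * μ i j * m i) :=
  robf_feasibility_general N K Nt σ hσ γ hγ σmax hσmax hfeas
end

section
/- Let μ_{i,j} > 0 and m̄_i > 0 satisfy, for every i, 1/m̄_i = (1/N_t)·Σ_{n,k} σ_{i,n,k}μ_{n,k}/(1+σ_{i,n,k}μ_{n,k}m̄_i) + 1, and set γ_{i,j} = σ_{i,i,j}μ_{i,j}m̄_i. Define m̄'_i = m̄_i² / (1 − (1/N_t)·Σ_{n,k} (σ_{i,n,k}μ_{n,k}m̄_i)²/(1+σ_{i,n,k}μ_{n,k}m̄_i)²), G_{i,n,k} = σ_{i,n,k}/(1+μ_{n,k}σ_{i,n,k}m̄_i)², let Γ be the NK×NK diagonal matrix with diagonal entries γ_{i,j}/(σ_{i,i,j}·G_{i,i,j}·m̄_i²), and let Δ be the NK×NK matrix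 whose ((i,j),(n,k)) entry is 0 if (n,k)=(i,j) and (1/N_t)·G_{n,i,j}·G_{n,n,k}·m̄'_n otherwise. Then the spectral radius of ΓΔ is strictly less than 1 and the matrix I − ΓΔ is invertible. -/
/-!
`ΓΔ` is entrywise nonnegative, and the positive weights `u (i, j) = G i i j * m i` satisfy
`u ᵀ Γ = μ ᵀ`. The fixed-point equation turns `m'` into `m i / (1 + (1/N_t) Σ μ n k * G i n k)`,
which is exactly what makes every column sum of `μ ᵀ Δ` fall strictly below `G q q * m q`, so
`u ᵀ ΓΔ < u ᵀ` entrywise. Weighting the moduli of a complex eigenvector `v` by `u` then gives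
`‖z‖ ⟪u, |v|⟫ ≤ ⟪u ΓΔ, |v|⟫ < ⟪u, |v|⟫`, so every eigenvalue lies in the open unit disc; in
particular `1` is not one, and `1 - ΓΔ` is invertible.
-/

open Finset Matrix

section NonnegMatrix

variable {ι : Type*} [Fintype ι] {A : Matrix ι ι ℝ}

lemma norm_mul_norm_le_of_mulVec_eq_smul (hA : ∀ p q, 0 ≤ A p q) {z : ℂ} {v : ι → ℂ}
    (hv : A.map Complex.ofReal *ᵥ v = z • v) (p : ι) :
    ‖z‖ * ‖v p‖ ≤ ∑ q, A p q * ‖v q‖ :=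
  calc ‖z‖ * ‖v p‖ = ‖∑ q, (A p q : ℂ) * v q‖ := by
        rw [← norm_mul, ← smul_eq_mul, ← Pi.smul_apply, ← hv]; rfl
    _ ≤ ∑ q, ‖(A p q : ℂ) * v q‖ := norm_sum_le _ _
    _ = ∑ q, A p q * ‖v q‖ := by
        simp only [norm_mul, Complex.norm_real, Real.norm_of_nonneg (hA p _)]

lemma norm_lt_one_of_mem_spectrum_of_vecMul_lt [DecidableEq ι] (hA : ∀ p q, 0 ≤ A p q)
    {u : ι → ℝ} (hu : ∀ p, 0 < u p) (hAu : ∀ q, (u ᵥ* A) q < u q) {z : ℂ}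
    (hz : z ∈ spectrum ℂ (A.map Complex.ofReal)) : ‖z‖ < 1 := by
  rw [← Matrix.spectrum_toLin', ← Module.End.hasEigenvalue_iff_mem_spectrum] at hz
  obtain ⟨v, hv⟩ := hz.exists_hasEigenvector
  obtain ⟨q₀, hq₀⟩ : ∃ q, v q ≠ 0 := Function.ne_iff.mp hv.2
  set w : ι → ℝ := fun q => ‖v q‖
  have hpos : 0 < u ⬝ᵥ w :=
    sum_pos' (fun q _ => mul_nonneg (hu q).le (norm_nonneg _))
      ⟨q₀, mem_univ _, mul_pos (hu q₀) (norm_pos_iff.mpr hq₀)⟩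
  have hlt : (u ᵥ* A) ⬝ᵥ w < u ⬝ᵥ w :=
    sum_lt_sum (fun q _ => mul_le_mul_of_nonneg_right (hAu q).le (norm_nonneg _))
      ⟨q₀, mem_univ _, mul_lt_mul_of_pos_right (hAu q₀) (norm_pos_iff.mpr hq₀)⟩
  have hle : ‖z‖ * (u ⬝ᵥ w) ≤ (u ᵥ* A) ⬝ᵥ w := by
    rw [← dotProduct_mulVec, dotProduct, dotProduct, mul_sum]
    refine sum_le_sum fun p _ => ?_
    rw [mul_left_comm]
    exact mul_le_mul_of_nonneg_left
      (norm_mul_norm_le_of_mulVec_eq_smul hA hv.apply_eq_smul p) (hu p).le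
  by_contra! h
  nlinarith

lemma isUnit_one_sub_of_forall_mem_spectrum_norm_lt_one [DecidableEq ι]
    (h : ∀ z ∈ spectrum ℂ (A.map Complex.ofReal), ‖z‖ < 1) : IsUnit (1 - A) := by
  have h1 : (1 : ℂ) ∉ spectrum ℂ (A.map Complex.ofReal) := fun h1 => by
    simpa using h 1 h1
  rw [spectrum.notMem_iff, Algebra.algebraMap_eq_smul_one, one_smul, isUnit_iff_isUnit_det,
    isUnit_iff_ne_zero] at h1
  rw [isUnit_iff_isUnit_det, isUnit_iff_ne_zero]
  intro hdet
  apply h1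
  have : 1 - A.map Complex.ofReal = Complex.ofRealHom.mapMatrix (1 - A) := by
    rw [map_sub, map_one]; rfl
  rw [this, ← RingHom.map_det, hdet, map_zero]

end NonnegMatrix

/-- With `b = s j * w j`, each term splits as `b / (1 + b m) = (b m)² / (1 + b m)² / m + w j * g j`,
so the fixed-point equation rewrites the denominator of `m'` as `m (1 + c ∑ j, w j * g j)`. -/
lemma eq_div_one_add_of_fixedPoint {κ : Type*} [Fintype κ] {s w g : κ → ℝ} {c m m' : ℝ}
    (hs : ∀ j, 0 ≤ s j) (hw : ∀ j, 0 ≤ w j) (hm : 0 < m)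
    (hfix : 1 / m = c * ∑ j, s j * w j / (1 + s j * w j * m) + 1)
    (hm' : m' = m ^ 2 / (1 - c * ∑ j, (s j * w j * m) ^ 2 / (1 + s j * w j * m) ^ 2))
    (hg : ∀ j, g j = s j / (1 + w j * s j * m) ^ 2) :
    m' = m / (1 + c * ∑ j, w j * g j) := by
  have hsplit : ∀ j, s j * w j / (1 + s j * w j * m)
      = (s j * w j * m) ^ 2 / (1 + s j * w j * m) ^ 2 / m + w j * g j := fun j => by
    have : 0 < 1 + s j * w j * m := by have := hs j; have := hw j; positivity
    rw [hg, mul_comm (w j) (s j)]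
    field_simp
    ring
  have hden : 1 - c * ∑ j, (s j * w j * m) ^ 2 / (1 + s j * w j * m) ^ 2
      = m * (1 + c * ∑ j, w j * g j) := by
    simp only [hsplit, sum_add_distrib, ← sum_div] at hfix
    generalize ∑ j, (s j * w j * m) ^ 2 / (1 + s j * w j * m) ^ 2 = S at hfix ⊢
    field_simp at hfix
    linear_combination hfix
  rw [hm', hden]
  field_simp

section ROBF

variable {N K Nt : ℕ} {σ : Fin N → Fin N → Fin K → ℝ} {μ : Fin N → Fin K → ℝ}
  {m m' : Fin N → ℝ} {G : Fin N → Fin N → Fin K → ℝ}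

lemma robf_G_pos (hσ : ∀ i n k, 0 < σ i n k) (hμ : ∀ n k, 0 < μ n k) (hm : ∀ i, 0 < m i)
    (hG : ∀ i n k, G i n k = σ i n k / (1 + μ n k * σ i n k * m i) ^ 2) (i n k) :
    0 < G i n k := by
  rw [hG]; have := hσ i n k; have := hμ n k; have := hm i; positivity

lemma robf_mPrime_eq (hσ : ∀ i n k, 0 < σ i n k) (hμ : ∀ n k, 0 < μ n k) (hm : ∀ i, 0 < m i)
    (hfp : ∀ i : Fin N, 1 / m i =
      (1 / (Nt : ℝ)) * ∑ n, ∑ k, σ i n k * μ n k / (1 + σ i n k * μ n k * m i) + 1)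
    (hm' : ∀ i, m' i = (m i) ^ 2 /
      (1 - (1 / (Nt : ℝ)) * ∑ n, ∑ k,
        (σ i n k * μ n k * m i) ^ 2 / (1 + σ i n k * μ n k * m i) ^ 2))
    (hG : ∀ i n k, G i n k = σ i n k / (1 + μ n k * σ i n k * m i) ^ 2) (i : Fin N) :
    m' i = m i / (1 + 1 / (Nt : ℝ) * ∑ p : Fin N × Fin K, μ p.1 p.2 * G i p.1 p.2) :=
  eq_div_one_add_of_fixedPoint (fun p => (hσ i p.1 p.2).le) (fun p => (hμ p.1 p.2).le) (hm i)
    (by simpa only [Fintype.sum_prod_type] using hfp i)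
    (by simpa only [Fintype.sum_prod_type] using hm' i) (fun p => hG i p.1 p.2)

lemma robf_mPrime_pos (hμ : ∀ n k, 0 < μ n k) (hG : ∀ i n k, 0 < G i n k) (hm : ∀ i, 0 < m i)
    (hm' : ∀ i, m' i = m i / (1 + 1 / (Nt : ℝ) * ∑ p : Fin N × Fin K, μ p.1 p.2 * G i p.1 p.2))
    (i : Fin N) : 0 < m' i := by
  have := hm i
  have : 0 ≤ ∑ p : Fin N × Fin K, μ p.1 p.2 * G i p.1 p.2 :=
    sum_nonneg fun p _ => (mul_pos (hμ p.1 p.2) (hG i p.1 p.2)).le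
  rw [hm']; positivity

lemma robf_gamma_eq_diagonal {γ : Fin N → Fin K → ℝ}
    {Γ : Matrix (Fin N × Fin K) (Fin N × Fin K) ℝ}
    (hσ : ∀ i n k, 0 < σ i n k) (hG : ∀ i n k, 0 < G i n k) (hm : ∀ i, 0 < m i)
    (hγ : ∀ i j, γ i j = σ i i j * μ i j * m i)
    (hΓ : Γ = Matrix.diagonal fun p : Fin N × Fin K =>
      γ p.1 p.2 / (σ p.1 p.1 p.2 * G p.1 p.1 p.2 * (m p.1) ^ 2)) :
    Γ = diagonal fun p : Fin N × Fin K => μ p.1 p.2 / (G p.1 p.1 p.2 * m p.1) := by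
  rw [hΓ]
  congr 1
  funext p
  have := hσ p.1 p.1 p.2; have := hG p.1 p.1 p.2; have := hm p.1
  rw [hγ]
  field_simp

variable {Δ : Matrix (Fin N × Fin K) (Fin N × Fin K) ℝ}

lemma robf_delta_nonneg (hG : ∀ i n k, 0 < G i n k) (hm' : ∀ i, 0 < m' i)
    (hΔ : ∀ p q : Fin N × Fin K,
      Δ p q = if q = p then 0 else (1 / (Nt : ℝ)) * G q.1 p.1 p.2 * G q.1 q.1 q.2 * m' q.1)
    (p q : Fin N × Fin K) : 0 ≤ Δ p q := by
  have := hG q.1 p.1 p.2; have := hG q.1 q.1 q.2; have := hm' q.1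
  rw [hΔ]; split_ifs <;> positivity

lemma robf_mu_vecMul_delta_lt (hμ : ∀ n k, 0 < μ n k) (hG : ∀ i n k, 0 < G i n k)
    (hm : ∀ i, 0 < m i)
    (hm' : ∀ i, m' i = m i / (1 + 1 / (Nt : ℝ) * ∑ p : Fin N × Fin K, μ p.1 p.2 * G i p.1 p.2))
    (hΔ : ∀ p q : Fin N × Fin K,
      Δ p q = if q = p then 0 else (1 / (Nt : ℝ)) * G q.1 p.1 p.2 * G q.1 q.1 q.2 * m' q.1)
    (q : Fin N × Fin K) :
    ((fun p : Fin N × Fin K => μ p.1 p.2) ᵥ* Δ) q < G q.1 q.1 q.2 * m q.1 := by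
  set R := 1 / (Nt : ℝ) * ∑ p : Fin N × Fin K, μ p.1 p.2 * G q.1 p.1 p.2
  have hR : 0 ≤ R :=
    mul_nonneg (by positivity) (sum_nonneg fun p _ => (mul_pos (hμ _ _) (hG _ _ _)).le)
  have hmR : m' q.1 * R < m q.1 := by
    have := hm q.1
    rw [hm', div_mul_eq_mul_div, div_lt_iff₀ (by positivity)]
    nlinarith
  calc ((fun p : Fin N × Fin K => μ p.1 p.2) ᵥ* Δ) q
      ≤ ∑ p : Fin N × Fin K,
          μ p.1 p.2 * (1 / (Nt : ℝ) * G q.1 p.1 p.2 * G q.1 q.1 q.2 * m' q.1) := by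
        refine sum_le_sum fun p _ => mul_le_mul_of_nonneg_left ?_ (hμ _ _).le
        have := hG q.1 p.1 p.2; have := hG q.1 q.1 q.2
        have := robf_mPrime_pos hμ hG hm hm' q.1
        show Δ p q ≤ _
        rw [hΔ]; split_ifs
        · positivity
        · rfl
    _ = G q.1 q.1 q.2 * (m' q.1 * R) := by
        simp only [R, mul_sum]; exact sum_congr rfl fun p _ => by ring
    _ < G q.1 q.1 q.2 * m q.1 := mul_lt_mul_of_pos_left hmR (hG _ _ _)

end ROBF

theorem robf_gamma_delta_spectral_radius_general
    (N K Nt : ℕ)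
    (σ : Fin N → Fin N → Fin K → ℝ) (hσ : ∀ i n k, 0 < σ i n k)
    (μ : Fin N → Fin K → ℝ) (hμ : ∀ i j, 0 < μ i j)
    (m : Fin N → ℝ) (hm : ∀ i, 0 < m i)
    (hfp : ∀ i : Fin N, 1 / m i =
      (1 / (Nt : ℝ)) * ∑ n, ∑ k, σ i n k * μ n k / (1 + σ i n k * μ n k * m i) + 1)
    (γ : Fin N → Fin K → ℝ) (hγ : ∀ i j, γ i j = σ i i j * μ i j * m i)
    (m' : Fin N → ℝ)
    (hm' : ∀ i, m' i = (m i) ^ 2 /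
      (1 - (1 / (Nt : ℝ)) * ∑ n, ∑ k,
        (σ i n k * μ n k * m i) ^ 2 / (1 + σ i n k * μ n k * m i) ^ 2))
    (G : Fin N → Fin N → Fin K → ℝ)
    (hG : ∀ i n k, G i n k = σ i n k / (1 + μ n k * σ i n k * m i) ^ 2)
    (Γ Δ : Matrix (Fin N × Fin K) (Fin N × Fin K) ℝ)
    (hΓ : Γ = Matrix.diagonal fun p : Fin N × Fin K =>
      γ p.1 p.2 / (σ p.1 p.1 p.2 * G p.1 p.1 p.2 * (m p.1) ^ 2))
    (hΔ : ∀ p q : Fin N × Fin K,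
      Δ p q = if q = p then 0
        else (1 / (Nt : ℝ)) * G q.1 p.1 p.2 * G q.1 q.1 q.2 * m' q.1) :
    (∀ z ∈ spectrum ℂ ((Γ * Δ).map Complex.ofReal), ‖z‖ < 1) ∧
    IsUnit (1 - Γ * Δ) := by
  have hG_pos := robf_G_pos hσ hμ hm hG
  have hm'_eq := robf_mPrime_eq hσ hμ hm hfp hm' hG
  have hm'_pos := robf_mPrime_pos hμ hG_pos hm hm'_eq
  rw [robf_gamma_eq_diagonal hσ hG_pos hm hγ hΓ]
  set u : Fin N × Fin K → ℝ := fun p => G p.1 p.1 p.2 * m p.1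
  have hu : ∀ p, 0 < u p := fun p => mul_pos (hG_pos _ _ _) (hm _)
  have hA : ∀ p q, 0 ≤ (diagonal (fun p => μ p.1 p.2 / u p) * Δ) p q := fun p q => by
    rw [diagonal_mul]
    exact mul_nonneg (div_pos (hμ _ _) (hu p)).le (robf_delta_nonneg hG_pos hm'_pos hΔ p q)
  have hcol : ∀ q, (u ᵥ* (diagonal (fun p => μ p.1 p.2 / u p) * Δ)) q < u q := fun q => by
    have hu_diag : u ᵥ* diagonal (fun p => μ p.1 p.2 / u p) = fun p => μ p.1 p.2 := by
      ext p; rw [vecMul_diagonal, mul_div_cancel₀ _ (hu p).ne']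
    rw [← vecMul_vecMul, hu_diag]
    exact robf_mu_vecMul_delta_lt hμ hG_pos hm hm'_eq hΔ q
  have hspec := fun z => norm_lt_one_of_mem_spectrum_of_vecMul_lt hA hu hcol (z := z)
  exact ⟨hspec, isUnit_one_sub_of_forall_mem_spectrum_norm_lt_one hspec⟩

/-- For any pair `(γ, μ)` satisfying the ROBF fixed-point system, the
matrix `ΓΔ` has spectral radius strictly less than one, and `I - ΓΔ` is invertible. -/
theorem robf_gamma_delta_spectral_radius
    (N K Nt : ℕ) (hNt : 0 < Nt)
    (σ : Fin N → Fin N → Fin K → ℝ) (hσ : ∀ i n k, 0 < σ i n k)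
    (μ : Fin N → Fin K → ℝ) (hμ : ∀ i j, 0 < μ i j)
    (m : Fin N → ℝ) (hm : ∀ i, 0 < m i)
    (hfp : ∀ i : Fin N, 1 / m i =
      (1 / (Nt : ℝ)) * ∑ n, ∑ k, σ i n k * μ n k / (1 + σ i n k * μ n k * m i) + 1)
    (γ : Fin N → Fin K → ℝ) (hγ : ∀ i j, γ i j = σ i i j * μ i j * m i)
    (m' : Fin N → ℝ)
    (hm' : ∀ i, m' i = (m i) ^ 2 /
      (1 - (1 / (Nt : ℝ)) * ∑ n, ∑ k,
        (σ i n k * μ n k * m i) ^ 2 / (1 + σ i n k * μ n k * m i) ^ 2))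
    (G : Fin N → Fin N → Fin K → ℝ)
    (hG : ∀ i n k, G i n k = σ i n k / (1 + μ n k * σ i n k * m i) ^ 2)
    (Γ Δ : Matrix (Fin N × Fin K) (Fin N × Fin K) ℝ)
    (hΓ : Γ = Matrix.diagonal fun p : Fin N × Fin K =>
      γ p.1 p.2 / (σ p.1 p.1 p.2 * G p.1 p.1 p.2 * (m p.1) ^ 2))
    (hΔ : ∀ p q : Fin N × Fin K,
      Δ p q = if q = p then 0
        else (1 / (Nt : ℝ)) * G q.1 p.1 p.2 * G q.1 q.1 q.2 * m' q.1) :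
    (∀ z ∈ spectrum ℂ ((Γ * Δ).map Complex.ofReal), ‖z‖ < 1) ∧
    IsUnit (1 - Γ * Δ) :=
  robf_gamma_delta_spectral_radius_general N K Nt σ hσ μ hμ m hm hfp γ hγ m' hm' G hG Γ Δ hΓ hΔ
end

section
/- Let σ_{i,n,k} > 0 with σ_{i,n,k} ≤ σ_max(n) for all n ≠ i and all k, and let μ_{n,k} > 0. Suppose m̄^mod_i > 0 satisfies the modified-system fixed-point equation 1/m̄^mod_i = (1/N_t)·Σ_{k} σ_{i,i,k}μ_{i,k}/(1+σ_{i,i,k}μ_{i,k}m̄^mod_i) + (1/N_t)·Σ_{n≠i} Σ_{k} σ_max(n)μ_{n,k}/(1+σ_max(n)μ_{n,k}m̄^mod_i) + 1, with γ_{i,j} = σ_{i,i,j}μ_{i,j}m̄^mod_i, and let m̄^mod1_i > 0 satisfy the original-system fixed-point equation 1/m̄^mod1_i = (1/N_t)·Σ_{n,k} σ_{i,n,k}μ_{n,k}/(1+σ_{i,n,k}μ_{n,k}m̄^mod1_i) + 1. Then σ_{i,i,j}·μ_{i,j}·m̄^mod1_i ≥ γ_{i,j} for all i, j; in particular, any target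 SINR vector feasible for the modified system is feasible for the original system. -/
open Finset

lemma key_term {c d s t : ℝ} (hc : 0 < c) (hcd : c ≤ d) (hs : 0 < s) (hst : s ≤ t) :
    s * (c / (1 + c * s)) ≤ t * (d / (1 + d * t)) := by
  have hd : 0 < d := hc.trans_le hcd
  have ht : 0 < t := hs.trans_le hst
  have h1 : 0 < 1 + c * s := by positivity
  have h2 : 0 < 1 + d * t := by positivity
  rw [show s * (c / (1 + c * s)) = s * c / (1 + c * s) by ring,
      show t * (d / (1 + d * t)) = t * d / (1 + d * t) by ring,
      div_le_div_iff₀ h1 h2]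
  nlinarith [mul_le_mul hst hcd hc.le ht.le]

/-- Any SINR target feasible for the modified system (with inter-cell
path losses raised to `σmax`) is also feasible for the original system. -/
theorem modified_feasible_implies_original_feasible
    (N K Nt : ℕ) (hNt : 0 < Nt)
    (σ : Fin N → Fin N → Fin K → ℝ) (hσ : ∀ i n k, 0 < σ i n k)
    (σmax : Fin N → ℝ)
    (hbound : ∀ (i n : Fin N) (k : Fin K), n ≠ i → σ i n k ≤ σmax n)
    (μ : Fin N → Fin K → ℝ) (hμ : ∀ n k, 0 < μ n k)
    (γ : Fin N → Fin K → ℝ)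
    (mmod : Fin N → ℝ) (hmmod : ∀ i, 0 < mmod i)
    (hfpmod : ∀ i : Fin N, 1 / mmod i =
      (1 / (Nt : ℝ)) * ∑ k, σ i i k * μ i k / (1 + σ i i k * μ i k * mmod i)
      + (1 / (Nt : ℝ)) * ∑ n ∈ Finset.univ.filter (fun n => n ≠ i), ∑ k,
          σmax n * μ n k / (1 + σmax n * μ n k * mmod i)
      + 1)
    (hγeq : ∀ i j, γ i j = σ i i j * μ i j * mmod i)
    (mmod1 : Fin N → ℝ) (hmmod1 : ∀ i, 0 < mmod1 i)
    (hfporig : ∀ i : Fin N, 1 / mmod1 i =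
      (1 / (Nt : ℝ)) * ∑ n, ∑ k,
        σ i n k * μ n k / (1 + σ i n k * μ n k * mmod1 i) + 1) :
    ∀ i j, γ i j ≤ σ i i j * μ i j * mmod1 i := by
  have hNt' : (0:ℝ) < (Nt:ℝ) := by exact_mod_cast hNt
  have key : ∀ i, mmod i ≤ mmod1 i := by
    intro i
    by_contra h
    push_neg at h
    have ha := hmmod i
    have hb := hmmod1 i
    set a := mmod i with ha'
    set b := mmod1 i with hb'
    -- e1 : a * RHS_mod = 1
    have e1 : a * ((1 / (Nt : ℝ)) * ∑ k, σ i i k * μ i k / (1 + σ i i k * μ i k * a)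
      + (1 / (Nt : ℝ)) * ∑ n ∈ Finset.univ.filter (fun n => n ≠ i), ∑ k,
          σmax n * μ n k / (1 + σmax n * μ n k * a)
      + 1) = 1 := by
      rw [← hfpmod i, mul_one_div, div_self ha.ne']
    have e2 : b * ((1 / (Nt : ℝ)) * ∑ n, ∑ k,
        σ i n k * μ n k / (1 + σ i n k * μ n k * b) + 1) = 1 := by
      rw [← hfporig i, mul_one_div, div_self hb.ne']
    -- sum comparison
    have hsum : ∑ n, ∑ k, b * (σ i n k * μ n k / (1 + σ i n k * μ n k * b)) ≤
        (∑ k, a * (σ i i k * μ i k / (1 + σ i i k * μ i k * a)))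
        + ∑ n ∈ Finset.univ.erase i, ∑ k, a * (σmax n * μ n k / (1 + σmax n * μ n k * a)) := by
      rw [← Finset.add_sum_erase _ _ (Finset.mem_univ i)]
      refine add_le_add ?_ ?_
      · refine Finset.sum_le_sum fun k _ => ?_
        exact key_term (mul_pos (hσ i i k) (hμ i k)) le_rfl hb h.le
      · refine Finset.sum_le_sum fun n hn => Finset.sum_le_sum fun k _ => ?_
        have hni : n ≠ i := (Finset.mem_erase.mp hn).1
        have hσb := hbound i n k hni
        exact key_term (mul_pos (hσ i n k) (hμ n k))
          (mul_le_mul_of_nonneg_right hσb (hμ n k).le) hb h.le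
    have hfil : Finset.univ.filter (fun n => n ≠ i) = Finset.univ.erase i :=
      Finset.filter_ne' Finset.univ i
    rw [hfil] at e1
    -- push multiplications into sums
    have hbC : b * ∑ n, ∑ k, σ i n k * μ n k / (1 + σ i n k * μ n k * b)
        = ∑ n, ∑ k, b * (σ i n k * μ n k / (1 + σ i n k * μ n k * b)) := by
      rw [Finset.mul_sum]
      exact Finset.sum_congr rfl fun n _ => Finset.mul_sum _ _ _
    have haA : a * ∑ k, σ i i k * μ i k / (1 + σ i i k * μ i k * a)
        = ∑ k, a * (σ i i k * μ i k / (1 + σ i i k * μ i k * a)) := Finset.mul_sum _ _ _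
    have haB : a * ∑ n ∈ Finset.univ.erase i, ∑ k, σmax n * μ n k / (1 + σmax n * μ n k * a)
        = ∑ n ∈ Finset.univ.erase i, ∑ k, a * (σmax n * μ n k / (1 + σmax n * μ n k * a)) := by
      rw [Finset.mul_sum]
      exact Finset.sum_congr rfl fun n _ => Finset.mul_sum _ _ _
    have e1' : (1 / (Nt : ℝ)) * ((∑ k, a * (σ i i k * μ i k / (1 + σ i i k * μ i k * a)))
        + ∑ n ∈ Finset.univ.erase i, ∑ k, a * (σmax n * μ n k / (1 + σmax n * μ n k * a)))
        + a = 1 := by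
      linear_combination e1 - (1 / (Nt : ℝ)) * haA - (1 / (Nt : ℝ)) * haB
    have e2' : (1 / (Nt : ℝ)) * (∑ n, ∑ k, b * (σ i n k * μ n k / (1 + σ i n k * μ n k * b)))
        + b = 1 := by
      linear_combination e2 - (1 / (Nt : ℝ)) * hbC
    have hmul := mul_le_mul_of_nonneg_left hsum (le_of_lt (one_div_pos.mpr hNt'))
    linarith
  intro i j
  rw [hγeq]
  have := key i
  have hpos : 0 < σ i i j * μ i j := mul_pos (hσ i i j) (hμ i j)
  nlinarith
end

section
/- For fixed N_t and nonnegative reals (t_a)_{a∈A}, let m(z) denote the unique positive solution of the fixed-point equation FP(t,z) for each z > 0. Then the function z ↦ m(z) is strictly decreasing on (0,∞): for all 0 < z₁ < z₂, m(z₁) > m(z₂). -/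
/-!
Multiplying `FP(t,z)` by `m` turns it into `(1/N_t) Σ t_a m / (1 + t_a m) + z m = 1`. For
`t_a ≥ 0` the left side is nondecreasing in `m ≥ 0` and, for `m > 0`, strictly increasing in
`z`, so `m₁ ≤ m₂` together with `z₁ < z₂` would make it exceed `1` at `(z₂, m₂)`.
-/

open Finset

lemma mul_div_one_add_mul_le_of_le {t m₁ m₂ : ℝ} (ht : 0 ≤ t) (hm₁ : 0 ≤ m₁) (hm : m₁ ≤ m₂) :
    t * m₁ / (1 + t * m₁) ≤ t * m₂ / (1 + t * m₂) := by
  rw [div_le_div_iff₀ (by positivity) (by nlinarith)]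
  nlinarith [mul_le_mul_of_nonneg_left hm ht]

section FixedPoint

variable {ι : Type*} [Fintype ι] (c : ℝ) (t : ι → ℝ)

noncomputable def fixedPointScaled (z m : ℝ) : ℝ := c * ∑ a, t a * m / (1 + t a * m) + z * m

variable {c t}

lemma fixedPointScaled_eq_one {z m : ℝ} (hm : m ≠ 0)
    (hfp : 1 / m = c * ∑ a, t a / (1 + t a * m) + z) : fixedPointScaled c t z m = 1 :=
  calc fixedPointScaled c t z m = (c * ∑ a, t a / (1 + t a * m) + z) * m := by
        simp only [fixedPointScaled, add_mul, mul_assoc, sum_mul, mul_div_right_comm]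
    _ = 1 := by rw [← hfp, one_div_mul_cancel hm]

lemma fixedPointScaled_lt_of_le_of_lt (hc : 0 ≤ c) (ht : ∀ a, 0 ≤ t a) {z₁ z₂ m₁ m₂ : ℝ}
    (hz₂ : 0 ≤ z₂) (hz : z₁ < z₂) (hm₁ : 0 < m₁) (hm : m₁ ≤ m₂) :
    fixedPointScaled c t z₁ m₁ < fixedPointScaled c t z₂ m₂ := by
  have hsum : ∑ a, t a * m₁ / (1 + t a * m₁) ≤ ∑ a, t a * m₂ / (1 + t a * m₂) :=
    sum_le_sum fun a _ ↦ mul_div_one_add_mul_le_of_le (ht a) hm₁.le hm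
  have hzm : z₁ * m₁ < z₂ * m₂ :=
    (mul_lt_mul_of_pos_right hz hm₁).trans_le (mul_le_mul_of_nonneg_left hm hz₂)
  unfold fixedPointScaled
  linarith [mul_le_mul_of_nonneg_left hsum hc]

end FixedPoint

theorem fixed_point_strict_antitone_in_z_general
    (Nt : ℕ)
    (A : Type*) [Fintype A]
    (t : A → ℝ) (ht : ∀ a, 0 ≤ t a)
    (z₁ z₂ m₁ m₂ : ℝ) (hz₁ : 0 < z₁) (hz : z₁ < z₂)
    (hm₁ : 0 < m₁) (hm₂ : 0 < m₂)
    (hfp₁ : 1 / m₁ = (1 / (Nt : ℝ)) * ∑ a, t a / (1 + t a * m₁) + z₁)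
    (hfp₂ : 1 / m₂ = (1 / (Nt : ℝ)) * ∑ a, t a / (1 + t a * m₂) + z₂) :
    m₂ < m₁ := by
  by_contra! hm
  have hlt := fixedPointScaled_lt_of_le_of_lt (c := 1 / (Nt : ℝ)) (by positivity) ht
    (hz₁.trans hz).le hz hm₁ hm
  rw [fixedPointScaled_eq_one hm₁.ne' hfp₁, fixedPointScaled_eq_one hm₂.ne' hfp₂] at hlt
  exact hlt.false

/-- The positive solution `m(z)` of the fixed-point equation FP(t,z)
is strictly decreasing in `z`. -/
theorem fixed_point_strict_antitone_in_z
    (Nt : ℕ) (hNt : 0 < Nt)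
    (A : Type*) [Fintype A] [Nonempty A]
    (t : A → ℝ) (ht : ∀ a, 0 ≤ t a)
    (z₁ z₂ m₁ m₂ : ℝ) (hz₁ : 0 < z₁) (hz : z₁ < z₂)
    (hm₁ : 0 < m₁) (hm₂ : 0 < m₂)
    (hfp₁ : 1 / m₁ = (1 / (Nt : ℝ)) * ∑ a, t a / (1 + t a * m₁) + z₁)
    (hfp₂ : 1 / m₂ = (1 / (Nt : ℝ)) * ∑ a, t a / (1 + t a * m₂) + z₂) :
    m₂ < m₁ :=
  fixed_point_strict_antitone_in_z_general Nt A t ht z₁ z₂ m₁ m₂ hz₁ hz hm₁ hm₂ hfp₁ hfp₂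
end

section
/- For every positive integer N_t, every finite family of nonnegative reals (t_a)_{a∈A}, and every real z > 0, there exists a unique m > 0 solving the fixed-point equation FP(t,z); moreover this solution satisfies m ≤ 1/z. -/
/-!
Multiplying the equation by `m > 0` turns it into `φ m = 1` with
`φ m = (1/N_t) ∑ t_a m / (1 + t_a m) + z m`. Each summand is nondecreasing in `m ≥ 0` and `z m` is
strictly increasing, so `φ` is strictly increasing on `[0, ∞)`, which gives uniqueness. As
`φ 0 = 0` and `φ (1/z) ≥ 1`, the intermediate value theorem yields a root in `(0, 1/z]`.
-/

open Finset Set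

section FixedPoint

variable {A : Type*} [Fintype A]

noncomputable def fixedPointRhs (c : ℝ) (t : A → ℝ) (z m : ℝ) : ℝ :=
  c * ∑ a, t a / (1 + t a * m) + z

lemma one_add_mul_pos {s m : ℝ} (hs : 0 ≤ s) (hm : 0 ≤ m) : 0 < 1 + s * m := by
  positivity

lemma monotoneOn_mul_div_one_add_mul {s : ℝ} (hs : 0 ≤ s) :
    MonotoneOn (fun m => m * (s / (1 + s * m))) (Ici 0) := by
  intro x (hx : 0 ≤ x) y (hy : 0 ≤ y) hxy
  have hx' := one_add_mul_pos hs hx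
  have hy' := one_add_mul_pos hs hy
  simp only [mul_div_assoc']
  rw [div_le_div_iff₀ hx' hy']
  nlinarith [mul_le_mul_of_nonneg_left hxy hs]

variable {c z : ℝ} {t : A → ℝ}

lemma mul_fixedPointRhs (m : ℝ) :
    m * fixedPointRhs c t z m = c * ∑ a, m * (t a / (1 + t a * m)) + z * m := by
  rw [fixedPointRhs, mul_add, mul_left_comm, mul_sum, mul_comm m z]

lemma strictMonoOn_mul_fixedPointRhs (hc : 0 ≤ c) (ht : ∀ a, 0 ≤ t a) (hz : 0 < z) :
    StrictMonoOn (fun m => m * fixedPointRhs c t z m) (Ici 0) := by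
  simp only [mul_fixedPointRhs]
  refine MonotoneOn.add_strictMono ?_ fun x _ y _ hxy => mul_lt_mul_of_pos_left hxy hz
  intro x hx y hy hxy
  exact mul_le_mul_of_nonneg_left
    (sum_le_sum fun a _ => monotoneOn_mul_div_one_add_mul (ht a) hx hy hxy) hc

lemma continuousOn_fixedPointRhs (ht : ∀ a, 0 ≤ t a) :
    ContinuousOn (fixedPointRhs c t z) (Ici 0) :=
  (continuousOn_const.mul <| continuousOn_finsetSum _ fun a _ =>
    continuousOn_const.div (by fun_prop) fun _ hm => (one_add_mul_pos (ht a) hm).ne').add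
    continuousOn_const

lemma exists_mul_fixedPointRhs_eq_one (hc : 0 ≤ c) (ht : ∀ a, 0 ≤ t a) (hz : 0 < z) :
    ∃ m ∈ Ioc 0 (1 / z), m * fixedPointRhs c t z m = 1 := by
  have hz' : 0 ≤ 1 / z := by positivity
  have hcont : ContinuousOn (fun m => m * fixedPointRhs c t z m) (Icc 0 (1 / z)) :=
    (continuousOn_id.mul (continuousOn_fixedPointRhs ht)).mono Icc_subset_Ici_self
  have hend : 1 ≤ 1 / z * fixedPointRhs c t z (1 / z) := by
    have hsum : 0 ≤ ∑ a, t a / (1 + t a * (1 / z)) :=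
      sum_nonneg fun a _ => div_nonneg (ht a) (one_add_mul_pos (ht a) hz').le
    rw [fixedPointRhs, mul_add, one_div_mul_cancel hz.ne']
    nlinarith [mul_nonneg hz' (mul_nonneg hc hsum)]
  obtain ⟨m, ⟨hm0, hmz⟩, hm⟩ :=
    intermediate_value_Icc hz' hcont ⟨by simp, hend⟩
  refine ⟨m, ⟨hm0.lt_of_ne ?_, hmz⟩, hm⟩
  rintro rfl
  simp at hm

lemma one_div_eq_fixedPointRhs_iff {m : ℝ} (hm : 0 < m) :
    1 / m = fixedPointRhs c t z m ↔ m * fixedPointRhs c t z m = 1 := by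
  rw [div_eq_iff hm.ne', mul_comm, eq_comm]

end FixedPoint

theorem fixed_point_exists_unique_general
    (Nt : ℕ)
    (A : Type*) [Fintype A]
    (t : A → ℝ) (ht : ∀ a, 0 ≤ t a)
    (z : ℝ) (hz : 0 < z) :
    ∃ m : ℝ,
      (0 < m ∧ 1 / m = (1 / (Nt : ℝ)) * ∑ a, t a / (1 + t a * m) + z ∧ m ≤ 1 / z) ∧
      ∀ m' : ℝ, 0 < m' →
        1 / m' = (1 / (Nt : ℝ)) * ∑ a, t a / (1 + t a * m') + z → m' = m := by
  have hc : (0 : ℝ) ≤ 1 / Nt := by positivity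
  obtain ⟨m, ⟨hm, hmz⟩, hroot⟩ := exists_mul_fixedPointRhs_eq_one hc ht hz
  refine ⟨m, ⟨hm, (one_div_eq_fixedPointRhs_iff hm).2 hroot, hmz⟩, fun m' hm' h' => ?_⟩
  have hroot' := (one_div_eq_fixedPointRhs_iff (c := 1 / Nt) hm').1 h'
  exact (strictMonoOn_mul_fixedPointRhs hc ht hz).injOn hm'.le hm.le (hroot'.trans hroot.symm)

/-- Existence and uniqueness of the positive solution of the
fixed-point equation FP(t,z), together with the bound `m ≤ 1/z`. -/
theorem fixed_point_exists_unique
    (Nt : ℕ) (hNt : 0 < Nt)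
    (A : Type*) [Fintype A] [Nonempty A]
    (t : A → ℝ) (ht : ∀ a, 0 ≤ t a)
    (z : ℝ) (hz : 0 < z) :
    ∃ m : ℝ,
      (0 < m ∧ 1 / m = (1 / (Nt : ℝ)) * ∑ a, t a / (1 + t a * m) + z ∧ m ≤ 1 / z) ∧
      ∀ m' : ℝ, 0 < m' →
        1 / m' = (1 / (Nt : ℝ)) * ∑ a, t a / (1 + t a * m') + z → m' = m :=
  fixed_point_exists_unique_general Nt A t ht z hz
end

section
/- Let (t_a)_{a∈A} and (t'_a)_{a∈A} be families of nonnegative reals with t_a ≤ t'_a for every a, and let z > 0. If m > 0 solves the fixed-point equation FP(t,z) and m' > 0 solves FP(t',z), then m' ≤ m (larger coefficients yield a smaller fixed-point value). -/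
open Finset

section FixedPointMap

variable {A : Type*} [Fintype A]

/-- The weight `c` stands for `1 / N_t`. -/
noncomputable def fixedPointMap (c z : ℝ) (t : A → ℝ) (m : ℝ) : ℝ :=
  c * ∑ a, t a * m / (1 + t a * m) + z * m

theorem fixedPointMap_eq_one {c z m : ℝ} {t : A → ℝ} (hm : m ≠ 0)
    (hfp : 1 / m = c * ∑ a, t a / (1 + t a * m) + z) :
    fixedPointMap c z t m = 1 := by
  calc fixedPointMap c z t m = (c * ∑ a, t a / (1 + t a * m) + z) * m := by
        simp only [fixedPointMap, add_mul, mul_assoc, sum_mul, div_mul_eq_mul_div]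
    _ = 1 := by rw [← hfp, one_div_mul_cancel hm]

theorem fixedPointMap_lt_fixedPointMap {c z m m' : ℝ} {t t' : A → ℝ} (hc : 0 ≤ c) (hz : 0 < z)
    (ht : ∀ a, 0 ≤ t a) (hle : ∀ a, t a ≤ t' a) (hm : 0 ≤ m) (hmm' : m < m') :
    fixedPointMap c z t m < fixedPointMap c z t' m' := by
  have hterm : ∀ a, t a * m / (1 + t a * m) ≤ t' a * m' / (1 + t' a * m') := fun a =>
    div_one_add_le_div_one_add (mul_nonneg (ht a) hm)
      (mul_le_mul (hle a) hmm'.le hm ((ht a).trans (hle a)))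
  exact add_lt_add_of_le_of_lt
    (mul_le_mul_of_nonneg_left (sum_le_sum fun a _ => hterm a) hc)
    (mul_lt_mul_of_pos_left hmm' hz)

end FixedPointMap

theorem fixed_point_antitone_in_coefficients_general
    (Nt : ℕ)
    (A : Type*) [Fintype A]
    (t t' : A → ℝ) (ht : ∀ a, 0 ≤ t a) (hle : ∀ a, t a ≤ t' a)
    (z : ℝ) (hz : 0 < z)
    (m m' : ℝ) (hm : 0 < m) (hm' : 0 < m')
    (hfp : 1 / m = (1 / (Nt : ℝ)) * ∑ a, t a / (1 + t a * m) + z)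
    (hfp' : 1 / m' = (1 / (Nt : ℝ)) * ∑ a, t' a / (1 + t' a * m') + z) :
    m' ≤ m := by
  have hF : fixedPointMap (1 / (Nt : ℝ)) z t m = 1 := fixedPointMap_eq_one hm.ne' hfp
  have hF' : fixedPointMap (1 / (Nt : ℝ)) z t' m' = 1 := fixedPointMap_eq_one hm'.ne' hfp'
  by_contra! hlt
  exact (fixedPointMap_lt_fixedPointMap (by positivity) hz ht hle hm.le hlt).ne (hF.trans hF'.symm)

/-- Larger coefficients in the fixed-point equation FP(t,z) yield a
smaller positive solution. -/
theorem fixed_point_antitone_in_coefficients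
    (Nt : ℕ) (hNt : 0 < Nt)
    (A : Type*) [Fintype A] [Nonempty A]
    (t t' : A → ℝ) (ht : ∀ a, 0 ≤ t a) (hle : ∀ a, t a ≤ t' a)
    (z : ℝ) (hz : 0 < z)
    (m m' : ℝ) (hm : 0 < m) (hm' : 0 < m')
    (hfp : 1 / m = (1 / (Nt : ℝ)) * ∑ a, t a / (1 + t a * m) + z)
    (hfp' : 1 / m' = (1 / (Nt : ℝ)) * ∑ a, t' a / (1 + t' a * m') + z) :
    m' ≤ m :=
  fixed_point_antitone_in_coefficients_general Nt A t t' ht hle z hz m m' hm hm' hfp hfp'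
end

section
/- Let m̄ > 0 solve the fixed-point equation FP(t,1), i.e., 1/m̄ = (1/N_t)·Σ_{a∈A} t_a/(1+t_a·m̄) + 1. Then (1/N_t)·Σ_{a∈A} (t_a·m̄/(1+t_a·m̄))² < 1; consequently the quantity m̄' := m̄² / (1 − (1/N_t)·Σ_{a∈A} (t_a·m̄/(1+t_a·m̄))²) is well-defined and strictly positive. -/
open Finset

/-! Writing `x_a = t_a m̄ / (1 + t_a m̄) ∈ [0, 1)`, the fixed-point equation multiplied by `m̄`
says exactly that the mean of the `x_a` is `1 - m̄`. Since `x_a² ≤ x_a`, the mean of the squares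
is at most `1 - m̄ < 1`. -/

lemma sq_div_one_add_self_le {x : ℝ} (hx : 0 ≤ x) : (x / (1 + x)) ^ 2 ≤ x / (1 + x) :=
  pow_le_of_le_one (by positivity) (div_le_one_of_le₀ (by linarith) (by positivity)) two_ne_zero

lemma mul_sum_div_one_add_eq_of_fixedPoint {ι : Type*} {s : Finset ι} {t : ι → ℝ} {c m z : ℝ}
    (hm : m ≠ 0) (hfp : 1 / m = c * ∑ a ∈ s, t a / (1 + t a * m) + z) :
    c * ∑ a ∈ s, t a * m / (1 + t a * m) = 1 - z * m :=
  calc c * ∑ a ∈ s, t a * m / (1 + t a * m) = m * (c * ∑ a ∈ s, t a / (1 + t a * m)) := by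
        simp_rw [mul_sum]
        exact sum_congr rfl fun a _ => by ring
    _ = m * (1 / m - z) := by rw [hfp]; ring
    _ = 1 - z * m := by field_simp

lemma mul_sum_sq_div_one_add_le_of_fixedPoint {ι : Type*} {s : Finset ι} {t : ι → ℝ}
    {c m z : ℝ} (hc : 0 ≤ c) (ht : ∀ a ∈ s, 0 ≤ t a) (hm : 0 < m)
    (hfp : 1 / m = c * ∑ a ∈ s, t a / (1 + t a * m) + z) :
    c * ∑ a ∈ s, (t a * m / (1 + t a * m)) ^ 2 ≤ 1 - z * m :=
  calc c * ∑ a ∈ s, (t a * m / (1 + t a * m)) ^ 2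
      ≤ c * ∑ a ∈ s, t a * m / (1 + t a * m) :=
        mul_le_mul_of_nonneg_left
          (sum_le_sum fun a ha => sq_div_one_add_self_le (mul_nonneg (ht a ha) hm.le)) hc
    _ = 1 - z * m := mul_sum_div_one_add_eq_of_fixedPoint hm.ne' hfp

theorem fixed_point_derivative_well_defined_general
    (Nt : ℕ)
    (A : Type*) [Fintype A]
    (t : A → ℝ) (ht : ∀ a, 0 ≤ t a)
    (m : ℝ) (hm : 0 < m)
    (hfp : 1 / m = (1 / (Nt : ℝ)) * ∑ a, t a / (1 + t a * m) + 1) :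
    (1 / (Nt : ℝ)) * ∑ a, (t a * m / (1 + t a * m)) ^ 2 < 1 ∧
    0 < m ^ 2 / (1 - (1 / (Nt : ℝ)) * ∑ a, (t a * m / (1 + t a * m)) ^ 2) := by
  have hle := mul_sum_sq_div_one_add_le_of_fixedPoint (by positivity) (fun a _ => ht a) hm hfp
  have hlt : (1 / (Nt : ℝ)) * ∑ a, (t a * m / (1 + t a * m)) ^ 2 < 1 := by linarith
  exact ⟨hlt, div_pos (by positivity) (sub_pos.mpr hlt)⟩

/-- For a solution `m̄` of FP(t,1), the normalized sum of squares is
strictly less than one, so the derivative-type quantity `m̄'` is well-defined and positive. -/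
theorem fixed_point_derivative_well_defined
    (Nt : ℕ) (hNt : 0 < Nt)
    (A : Type*) [Fintype A] [Nonempty A]
    (t : A → ℝ) (ht : ∀ a, 0 ≤ t a)
    (m : ℝ) (hm : 0 < m)
    (hfp : 1 / m = (1 / (Nt : ℝ)) * ∑ a, t a / (1 + t a * m) + 1) :
    (1 / (Nt : ℝ)) * ∑ a, (t a * m / (1 + t a * m)) ^ 2 < 1 ∧
    0 < m ^ 2 / (1 - (1 / (Nt : ℝ)) * ∑ a, (t a * m / (1 + t a * m)) ^ 2) :=
  fixed_point_derivative_well_defined_general Nt A t ht m hm hfp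
end

section
/- Fix a cell i. Let σ_{i,n,k} > 0 and μ_{n,k} ≥ 0, set t_{n,k} = σ_{i,n,k}·μ_{n,k}, and let m̄ > 0 solve 1/m̄ = (1/N_t)·Σ_{n,k} t_{n,k}/(1+t_{n,k}·m̄) + 1. Define m̄' = m̄² / (1 − (1/N_t)·Σ_{n,k} (t_{n,k}·m̄/(1+t_{n,k}·m̄))²) and G_{n,k} = σ_{i,n,k}/(1+t_{n,k}·m̄)². Then for every j with μ_{i,j} arbitrary nonnegative, the asymptotic uplink SINR expression satisfies the identity: σ_{i,i,j}·μ_{i,j}·m̄² / ( (1/N_t)·Σ_{n,k} μ_{n,k}·G_{n,k}·m̄' + m̄' ) = σ_{i,i,j}·μ_{i,j}·m̄. -/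
open Finset

/-!
Write `A = (1/N_t) Σ t/(1+t m̄)` and `B = (1/N_t) Σ t/(1+t m̄)²`. Since
`(t m̄/(1+t m̄))² = m̄ t/(1+t m̄) - m̄ t/(1+t m̄)²`, the fixed-point equation `1 = m̄ A + m̄` turns
the denominator of `m̄'` into `m̄ (1 + B)`, so `m̄' = m̄/(1 + B)`. As `μ G = t/(1+t m̄)²`, the
denominator of the SINR is `B m̄' + m̄' = m̄`, and the SINR collapses to `σ μ m̄`.
-/

theorem sq_mul_div_one_add_mul {K : Type*} [Field K] (t m : K) :
    (t * m / (1 + t * m)) ^ 2 = m * (t / (1 + t * m)) - m * (t / (1 + t * m) ^ 2) := by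
  rcases eq_or_ne (1 + t * m) 0 with h | h
  · simp [h]
  · field_simp
    ring

section FixedPoint

variable {K ι : Type*} [Field K] [Fintype ι] {t : ι → K} {c m : K}

theorem one_sub_sum_sq_eq_of_fixed_point (hm : m ≠ 0)
    (hfp : 1 / m = c * ∑ i, t i / (1 + t i * m) + 1) :
    1 - c * ∑ i, (t i * m / (1 + t i * m)) ^ 2
      = m * (1 + c * ∑ i, t i / (1 + t i * m) ^ 2) := by
  have hone : 1 = m * (c * ∑ i, t i / (1 + t i * m)) + m := by
    rw [← mul_add_one, ← hfp, mul_one_div_cancel hm]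
  simp only [sq_mul_div_one_add_mul, sum_sub_distrib, ← mul_sum]
  linear_combination hone

theorem mul_sum_add_eq_of_fixed_point [LinearOrder K] [IsStrictOrderedRing K]
    (ht : ∀ i, 0 ≤ t i) (hc : 0 ≤ c) (hm : m ≠ 0)
    (hfp : 1 / m = c * ∑ i, t i / (1 + t i * m) + 1) {m' : K}
    (hm' : m' = m ^ 2 / (1 - c * ∑ i, (t i * m / (1 + t i * m)) ^ 2)) :
    c * ∑ i, t i / (1 + t i * m) ^ 2 * m' + m' = m := by
  rw [one_sub_sum_sq_eq_of_fixed_point hm hfp] at hm'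
  rw [← sum_mul, ← mul_assoc, hm']
  set B := c * ∑ i, t i / (1 + t i * m) ^ 2
  have hB : 0 ≤ B := mul_nonneg hc (sum_nonneg fun i _ => div_nonneg (ht i) (sq_nonneg _))
  have hB₁ : 1 + B ≠ 0 := by positivity
  field_simp
  ring

end FixedPoint

theorem asymptotic_uplink_sinr_identity_general
    (N K Nt : ℕ)
    (i : Fin N) (j : Fin K)
    (σ : Fin N → Fin K → ℝ) (hσ : ∀ n k, 0 < σ n k)
    (μ : Fin N → Fin K → ℝ) (hμ : ∀ n k, 0 ≤ μ n k)
    (t : Fin N → Fin K → ℝ) (ht : ∀ n k, t n k = σ n k * μ n k)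
    (m : ℝ) (hm : 0 < m)
    (hfp : 1 / m = (1 / (Nt : ℝ)) * ∑ n, ∑ k, t n k / (1 + t n k * m) + 1)
    (m' : ℝ)
    (hm' : m' = m ^ 2 /
      (1 - (1 / (Nt : ℝ)) * ∑ n, ∑ k, (t n k * m / (1 + t n k * m)) ^ 2))
    (G : Fin N → Fin K → ℝ)
    (hG : ∀ n k, G n k = σ n k / (1 + t n k * m) ^ 2) :
    σ i j * μ i j * m ^ 2 /
      ((1 / (Nt : ℝ)) * (∑ n, ∑ k, μ n k * G n k * m') + m')
      = σ i j * μ i j * m := by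
  have hμG : ∀ n k, μ n k * G n k = t n k / (1 + t n k * m) ^ 2 := fun n k => by
    rw [hG, ht]
    ring
  have ht₀ (x : Fin N × Fin K) : 0 ≤ t x.1 x.2 := by
    rw [ht]
    exact mul_nonneg (hσ _ _).le (hμ _ _)
  have hden : (1 / (Nt : ℝ)) * (∑ n, ∑ k, μ n k * G n k * m') + m' = m := by
    simp only [hμG]
    simpa only [Fintype.sum_prod_type] using
      mul_sum_add_eq_of_fixed_point ht₀ (by positivity) hm.ne'
        (by simpa only [Fintype.sum_prod_type] using hfp)
        (by simpa only [Fintype.sum_prod_type] using hm')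
  rw [hden]
  field_simp

/-- The asymptotic uplink SINR expression of the ROBF algorithm
simplifies to `σ_{i,i,j} μ_{i,j} m̄`. -/
theorem asymptotic_uplink_sinr_identity
    (N K Nt : ℕ) (hNt : 0 < Nt)
    (i : Fin N) (j : Fin K)
    (σ : Fin N → Fin K → ℝ) (hσ : ∀ n k, 0 < σ n k)
    (μ : Fin N → Fin K → ℝ) (hμ : ∀ n k, 0 ≤ μ n k)
    (t : Fin N → Fin K → ℝ) (ht : ∀ n k, t n k = σ n k * μ n k)
    (m : ℝ) (hm : 0 < m)
    (hfp : 1 / m = (1 / (Nt : ℝ)) * ∑ n, ∑ k, t n k / (1 + t n k * m) + 1)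
    (m' : ℝ)
    (hm' : m' = m ^ 2 /
      (1 - (1 / (Nt : ℝ)) * ∑ n, ∑ k, (t n k * m / (1 + t n k * m)) ^ 2))
    (G : Fin N → Fin K → ℝ)
    (hG : ∀ n k, G n k = σ n k / (1 + t n k * m) ^ 2) :
    σ i j * μ i j * m ^ 2 /
      ((1 / (Nt : ℝ)) * (∑ n, ∑ k, μ n k * G n k * m') + m')
      = σ i j * μ i j * m :=
  asymptotic_uplink_sinr_identity_general N K Nt i j σ hσ μ hμ t ht m hm hfp m' hm' G hG
end

section
/- Let x₁,…,x_K ∈ ℂ^{N}, let μ₁,…,μ_K > 0 and δ₁,…,δ_K ≥ 0 be real numbers, and set Φ = I_N + Σ_{k=1}^{K} μ_k·x_k·x_kᴴ and A = Φ⁻¹·(Σ_{k=1}^{K} δ_k·x_k·x_kᴴ)·Φ⁻¹. Then A is Hermitian positive semidefinite and its spectral norm (largest eigenvalue) satisfies ‖A‖ ≤ max_{1≤k≤K} δ_k/μ_k. -/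
/-!
With `T = Σ μ_k x_k x_kᴴ`, `S = Σ δ_k x_k x_kᴴ` and `c = max_k δ_k / μ_k`, the Loewner order gives
`S ≤ c T` termwise, and `T ≤ (1 + T)²` because the difference `1 + T + T²` is positive.
Conjugating both by the Hermitian matrix `Φ⁻¹ = (1 + T)⁻¹` yields `0 ≤ A ≤ c Φ⁻¹ T Φ⁻¹ ≤ c`,
so the spectrum of `A` lies in `[0, c]`.
-/

open Matrix Finset
open scoped ComplexOrder MatrixOrder

namespace Matrix

variable {𝕜 n ι : Type*} [RCLike 𝕜] [Fintype ι]

def weightedOuterSum (r : ι → ℝ) (x : ι → n → 𝕜) : Matrix n n 𝕜 :=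
  ∑ k, r k • vecMulVec (x k) (star (x k))

lemma weightedOuterSum_smul (c : ℝ) (r : ι → ℝ) (x : ι → n → 𝕜) :
    weightedOuterSum (c • r) x = c • weightedOuterSum r x := by
  simp [weightedOuterSum, smul_sum, smul_smul]

variable [Fintype n]

lemma weightedOuterSum_nonneg {r : ι → ℝ} (hr : 0 ≤ r) (x : ι → n → 𝕜) :
    0 ≤ weightedOuterSum r x := by
  rw [nonneg_iff_posSemidef]
  exact posSemidef_sum _ fun k _ => (posSemidef_vecMulVec_self_star (x k)).smul (hr k)

lemma weightedOuterSum_mono {r s : ι → ℝ} (h : r ≤ s) (x : ι → n → 𝕜) :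
    weightedOuterSum r x ≤ weightedOuterSum s x := by
  rw [← sub_nonneg]
  simpa [weightedOuterSum, sub_smul] using weightedOuterSum_nonneg (sub_nonneg.mpr h) x

variable [DecidableEq n]

lemma isSelfAdjoint_inv_one_add {T : Matrix n n 𝕜} (hT : 0 ≤ T) : IsSelfAdjoint (1 + T)⁻¹ :=
  (isHermitian_one.add (IsSelfAdjoint.of_nonneg hT)).inv

lemma le_one_add_mul_one_add {T : Matrix n n 𝕜} (hT : 0 ≤ T) : T ≤ (1 + T) * (1 + T) := by
  have : (1 + T) * (1 + T) - T = 1 + T + star T * T := by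
    rw [(IsSelfAdjoint.of_nonneg hT).star_eq]
    noncomm_ring
  rw [← sub_nonneg, this]
  exact add_nonneg (add_nonneg zero_le_one hT) (star_mul_self_nonneg T)

lemma inv_one_add_mul_mul_inv_one_add_le_one {T : Matrix n n 𝕜} (hT : 0 ≤ T) :
    (1 + T)⁻¹ * T * (1 + T)⁻¹ ≤ 1 := by
  have hΦ : (1 + T).PosDef := PosDef.one.add_posSemidef (nonneg_iff_posSemidef.mp hT)
  have hdet : IsUnit (1 + T).det := (isUnit_iff_isUnit_det _).mp hΦ.isUnit
  calc (1 + T)⁻¹ * T * (1 + T)⁻¹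
      ≤ (1 + T)⁻¹ * ((1 + T) * (1 + T)) * (1 + T)⁻¹ :=
        (isSelfAdjoint_inv_one_add hT).conjugate_le_conjugate (le_one_add_mul_one_add hT)
    _ = 1 := by
      rw [← mul_assoc, nonsing_inv_mul _ hdet, one_mul, mul_nonsing_inv _ hdet]

lemma norm_le_of_mem_spectrum_of_le_algebraMap {A : Matrix n n 𝕜} (hA : 0 ≤ A) {c : ℝ}
    (hAc : A ≤ algebraMap ℝ _ c) {z : 𝕜} (hz : z ∈ spectrum 𝕜 A) : ‖z‖ ≤ c := by
  have hA' := nonneg_iff_posSemidef.mp hA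
  rw [hA'.isHermitian.spectrum_eq_image_range] at hz
  obtain ⟨_, ⟨i, rfl⟩, rfl⟩ := hz
  rw [RCLike.norm_ofReal, abs_of_nonneg (hA'.eigenvalues_nonneg i)]
  exact (le_algebraMap_iff_spectrum_le hA'.isHermitian.isSelfAdjoint).mp hAc _
    (hA'.isHermitian.eigenvalues_mem_spectrum_real i)

lemma inv_one_add_mul_mul_inv_one_add_le_algebraMap {S T : Matrix n n 𝕜} {c : ℝ} (hc : 0 ≤ c)
    (hT : 0 ≤ T) (hST : S ≤ c • T) :
    (1 + T)⁻¹ * S * (1 + T)⁻¹ ≤ algebraMap ℝ _ c := by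
  calc (1 + T)⁻¹ * S * (1 + T)⁻¹ ≤ (1 + T)⁻¹ * (c • T) * (1 + T)⁻¹ :=
        (isSelfAdjoint_inv_one_add hT).conjugate_le_conjugate hST
    _ = c • ((1 + T)⁻¹ * T * (1 + T)⁻¹) := by rw [mul_smul_comm, smul_mul_assoc]
    _ ≤ c • 1 := smul_le_smul_of_nonneg_left (inv_one_add_mul_mul_inv_one_add_le_one hT) hc
    _ = algebraMap ℝ _ c := (Algebra.algebraMap_eq_smul_one c).symm

end Matrix

/-- The matrix `A = Φ⁻¹ (Σ δ_k x_k x_kᴴ) Φ⁻¹`, with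
`Φ = I + Σ μ_k x_k x_kᴴ`, is Hermitian positive semidefinite with spectral norm
(largest eigenvalue) at most `max_k δ_k/μ_k`. -/
theorem regularized_interference_matrix_norm_bound
    (N K : ℕ) (hK : 0 < K)
    (x : Fin K → Fin N → ℂ)
    (μ δ : Fin K → ℝ) (hμ : ∀ k, 0 < μ k) (hδ : ∀ k, 0 ≤ δ k)
    (Φ A : Matrix (Fin N) (Fin N) ℂ)
    (hΦ : Φ = 1 + ∑ k, (μ k : ℂ) • Matrix.vecMulVec (x k) (star (x k)))
    (hA : A = Φ⁻¹ * (∑ k, (δ k : ℂ) • Matrix.vecMulVec (x k) (star (x k))) * Φ⁻¹) :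
    A.IsHermitian ∧ A.PosSemidef ∧
    ∀ z ∈ spectrum ℂ A, ‖z‖ ≤
      Finset.univ.sup' (Finset.univ_nonempty_iff.mpr (Fin.pos_iff_nonempty.mp hK))
        (fun k => δ k / μ k) := by
  set c := Finset.univ.sup' (Finset.univ_nonempty_iff.mpr (Fin.pos_iff_nonempty.mp hK))
    (fun k => δ k / μ k)
  have hc : 0 ≤ c := le_sup'_of_le _ (mem_univ ⟨0, hK⟩) (div_nonneg (hδ _) (hμ _).le)
  have hδμ : δ ≤ c • μ := fun k =>
    (div_le_iff₀ (hμ k)).mp (le_sup' (fun k => δ k / μ k) (mem_univ k))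
  have hT : 0 ≤ weightedOuterSum μ x := weightedOuterSum_nonneg (fun k => (hμ k).le) x
  have hS : 0 ≤ weightedOuterSum δ x := weightedOuterSum_nonneg hδ x
  replace hA : A = (1 + weightedOuterSum μ x)⁻¹ * weightedOuterSum δ x *
      (1 + weightedOuterSum μ x)⁻¹ := by
    simp only [hA, hΦ, weightedOuterSum, Complex.coe_smul]
  have hA0 : 0 ≤ A := hA ▸ (isSelfAdjoint_inv_one_add hT).conjugate_nonneg hS
  have hApsd := nonneg_iff_posSemidef.mp hA0
  have hAc : A ≤ algebraMap ℝ _ c := hA ▸ inv_one_add_mul_mul_inv_one_add_le_algebraMap hc hT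
    ((weightedOuterSum_mono hδμ x).trans_eq (weightedOuterSum_smul c μ x))
  exact ⟨hApsd.isHermitian, hApsd,
    fun z hz => norm_le_of_mem_spectrum_of_le_algebraMap hA0 hAc hz⟩
end
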